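/- arXiv:2303.06690 — 2 statements merged into one kernel-verified Lean document; each statement's English description precedes it below -/
import Mathlib

section
/- Let K be a field, let A and B be nonzero finite-dimensional commutative K-algebras, and set n = dim_K A. Suppose there exists a K-algebra isomorphism A ⊗_K B ≅ B^n (the product of n copies of B, i.e. the algebra of functions from Fin n to B). Then A is reduced, i.e. A has no nonzero nilpotent elements. -/
open TensorProduct

/-- Let `K` be a field, `A` and `B` nonzero finite-dimensional commutative `K`-algebras, and
`n = dim_K A`. If there is a `K`-algebra isomorphism `A ⊗[K] B ≅ B^n` (the algebra of
functions from `Fin n` to `B`), then `A` is reduced. -/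
theorem isReduced_of_tensor_iso_pi
    (K A B : Type*) [Field K] [CommRing A] [CommRing B]
    [Algebra K A] [Algebra K B] [Nontrivial A] [Nontrivial B]
    [FiniteDimensional K A] [FiniteDimensional K B]
    (e : Nonempty ((A ⊗[K] B) ≃ₐ[K] (Fin (Module.finrank K A) → B))) :
    IsReduced A := by
  obtain ⟨e⟩ := e
  set n := Module.finrank K A with hn
  set NA := nilradical A with hNA
  set NB := nilradical B with hNB
  -- the reduced quotients
  haveI hredB' : IsReduced (B ⧸ NB) :=
    (Ideal.isRadical_iff_quotient_reduced _).mp (Ideal.radical_isRadical (⊥ : Ideal B))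
  haveI : Module.Finite K (B ⧸ NB) := Module.Finite.of_surjective
    (Ideal.Quotient.mkₐ K NB).toLinearMap Ideal.Quotient.mk_surjective
  haveI : Module.Finite K (A ⧸ NA) := Module.Finite.of_surjective
    (Ideal.Quotient.mkₐ K NA).toLinearMap Ideal.Quotient.mk_surjective
  haveI : Nontrivial (B ⧸ NB) := by
    refine Ideal.Quotient.nontrivial_iff.mpr ?_
    rw [Ne, Ideal.eq_top_iff_one, hNB, mem_nilradical]
    rintro ⟨k, hk⟩
    rw [one_pow] at hk
    exact one_ne_zero hk
  -- the map χ : A ⊗ B → (B ⧸ NB)^n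
  let π : (Fin n → B) →ₐ[K] (Fin n → B ⧸ NB) :=
    Pi.algHom K _ fun i => (Ideal.Quotient.mkₐ K NB).comp (Pi.evalAlgHom K _ i)
  have hπ : Function.Surjective π := by
    intro x
    choose y hy using fun i => Ideal.Quotient.mk_surjective (x i)
    exact ⟨y, funext hy⟩
  let χ : (A ⊗[K] B) →ₐ[K] (Fin n → B ⧸ NB) := π.comp e.toAlgHom
  have hχsurj : Function.Surjective χ := hπ.comp e.surjective
  have hχnil : ∀ x : A ⊗[K] B, IsNilpotent x → χ x = 0 := fun x hx =>
    (hx.map χ).eq_zero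
  -- factor χ through (A ⧸ NA) ⊗ (B ⧸ NB)
  let f₁ : (A ⧸ NA) →ₐ[K] (Fin n → B ⧸ NB) :=
    Ideal.Quotient.liftₐ NA (χ.comp Algebra.TensorProduct.includeLeft)
      (fun a ha => hχnil _ ((mem_nilradical.mp ha).map
        (Algebra.TensorProduct.includeLeft : A →ₐ[K] A ⊗[K] B)))
  let f₂ : (B ⧸ NB) →ₐ[K] (Fin n → B ⧸ NB) :=
    Ideal.Quotient.liftₐ NB (χ.comp Algebra.TensorProduct.includeRight)
      (fun b hb => hχnil _ ((mem_nilradical.mp hb).map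
        (Algebra.TensorProduct.includeRight : B →ₐ[K] A ⊗[K] B)))
  let ψ : ((A ⧸ NA) ⊗[K] (B ⧸ NB)) →ₐ[K] (Fin n → B ⧸ NB) :=
    Algebra.TensorProduct.lift f₁ f₂ (fun _ _ => Commute.all _ _)
  have key : ψ.comp (Algebra.TensorProduct.map (Ideal.Quotient.mkₐ K NA)
      (Ideal.Quotient.mkₐ K NB)) = χ := by
    apply Algebra.TensorProduct.ext'
    intro a b
    simp only [AlgHom.coe_comp, Function.comp_apply, Algebra.TensorProduct.map_tmul,
      Ideal.Quotient.mkₐ_eq_mk, ψ, Algebra.TensorProduct.lift_tmul]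
    have h1 : f₁ (Ideal.Quotient.mk NA a) = χ (a ⊗ₜ[K] 1) := rfl
    have h2 : f₂ (Ideal.Quotient.mk NB b) = χ (1 ⊗ₜ[K] b) := rfl
    rw [h1, h2, ← map_mul, Algebra.TensorProduct.tmul_mul_tmul, mul_one, one_mul]
  have hψsurj : Function.Surjective ψ := by
    have : Function.Surjective (ψ.comp (Algebra.TensorProduct.map (Ideal.Quotient.mkₐ K NA)
        (Ideal.Quotient.mkₐ K NB))) := key ▸ hχsurj
    exact Function.Surjective.of_comp this
  -- dimension count
  set m := Module.finrank K (B ⧸ NB) with hm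
  have hmpos : 0 < m := Module.finrank_pos
  have hdim1 : Module.finrank K (Fin n → B ⧸ NB) = n * m := by
    rw [Module.finrank_pi_fintype K, Finset.sum_const, Finset.card_univ, Fintype.card_fin,
      smul_eq_mul]
  have hdim2 : Module.finrank K ((A ⧸ NA) ⊗[K] (B ⧸ NB)) =
      Module.finrank K (A ⧸ NA) * m := Module.finrank_tensorProduct
  have hle : Module.finrank K (Fin n → B ⧸ NB) ≤
      Module.finrank K ((A ⧸ NA) ⊗[K] (B ⧸ NB)) := by
    have hr : LinearMap.range ψ.toLinearMap = ⊤ := LinearMap.range_eq_top.mpr hψsurj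
    have := LinearMap.finrank_range_le ψ.toLinearMap
    rwa [hr, finrank_top K _] at this
  have hge : Module.finrank K (A ⧸ NA) ≤ n := by
    have hr : LinearMap.range (Ideal.Quotient.mkₐ K NA).toLinearMap = ⊤ :=
      LinearMap.range_eq_top.mpr Ideal.Quotient.mk_surjective
    have := LinearMap.finrank_range_le (Ideal.Quotient.mkₐ K NA).toLinearMap
    rwa [hr, finrank_top K _] at this
  have hnle : n ≤ Module.finrank K (A ⧸ NA) := by
    rw [hdim1, hdim2] at hle
    exact Nat.le_of_mul_le_mul_right hle hmpos
  have heq : Module.finrank K A = Module.finrank K (A ⧸ NA) := le_antisymm hnle hge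
  have hinj : Function.Injective (Ideal.Quotient.mkₐ K NA).toLinearMap :=
    (LinearMap.injective_iff_surjective_of_finrank_eq_finrank heq).mpr
      Ideal.Quotient.mk_surjective
  constructor
  intro x hx
  have : (Ideal.Quotient.mkₐ K NA).toLinearMap x = (Ideal.Quotient.mkₐ K NA).toLinearMap 0 := by
    simp only [AlgHom.toLinearMap_apply, map_zero, Ideal.Quotient.mkₐ_eq_mk]
    exact Ideal.Quotient.eq_zero_iff_mem.mpr (mem_nilradical.mpr hx)
  exact hinj this
end

section
/- Let K be a field, G a group, and H a subgroup of G of finite index n, where n is invertible in K (for instance char K = 0). Let V be a K-linear representation of G whose restriction to H is a semisimple representation of H. Then V is a semisimple representation of G. -/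
/-!
Averaging over cosets. Semisimplicity of the restriction gives, for a `G`-stable subspace `W`,
an `H`-equivariant projection `π` onto `W`. The conjugate `ρ g ∘ π ∘ ρ g⁻¹` depends only on the
coset `gH`, and `[G : H]⁻¹ ∑_{gH ∈ G/H} ρ g ∘ π ∘ ρ g⁻¹` is a `G`-equivariant projection onto `W`,
whose kernel is a `G`-stable complement of `W`.
-/

open LinearMap

namespace Subrepresentation

variable {K G V : Type*} [Ring K] [Monoid G] [AddCommGroup V] [Module K V]
  {ρ : Representation K G V}

theorem isCompl_toSubmodule_iff {W W' : Subrepresentation ρ} :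
    IsCompl W.toSubmodule W'.toSubmodule ↔ IsCompl W W' := by
  simp only [isCompl_iff, disjoint_iff, codisjoint_iff, ← toSubmodule_inf, ← toSubmodule_sup,
    ← toSubmodule_injective.eq_iff]
  rfl

def restrict {H : Type*} [Monoid H] (W : Subrepresentation ρ) (f : H →* G) :
    Subrepresentation (ρ.comp f) :=
  ⟨W.toSubmodule, fun h _ hv => W.apply_mem_toSubmodule (f h) hv⟩

theorem exists_isCompl_of_isProj {W : Subrepresentation ρ} (f : ρ.IntertwiningMap ρ)
    (hf : IsProj W.toSubmodule f.toLinearMap) : ∃ W', IsCompl W W' :=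
  ⟨f.ker, isCompl_toSubmodule_iff.1 hf.isCompl⟩

theorem _root_.IsCompl.exists_isProj_subrepresentation {W W' : Subrepresentation ρ}
    (h : IsCompl W W') : ∃ f : ρ.IntertwiningMap ρ, IsProj W.toSubmodule f.toLinearMap := by
  have h' := isCompl_toSubmodule_iff.2 h
  have hidem := Submodule.isIdempotentElem_projection h'
  refine ⟨⟨W.toSubmodule.projection _ h', fun g => ?_⟩, ⟨Submodule.projection_apply_mem h',
    fun _ => Submodule.projection_apply_of_mem_left h'⟩⟩
  refine ((hidem.commute_iff (T := ρ g)).2 ⟨?_, ?_⟩).eq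
  · rw [Submodule.range_projection]
    exact fun v hv => W.apply_mem_toSubmodule g hv
  · rw [Submodule.ker_projection]
    exact fun v hv => W'.apply_mem_toSubmodule g hv

end Subrepresentation

theorem LinearMap.IsProj.inv_card_smul_sum {K V ι : Type*} [Field K] [AddCommGroup V]
    [Module K V] [Fintype ι] {m : Submodule K V} {f : ι → V →ₗ[K] V} (hf : ∀ i, IsProj m (f i))
    (hι : (Fintype.card ι : K) ≠ 0) : IsProj m ((Fintype.card ι : K)⁻¹ • ∑ i, f i) := by
  refine ⟨fun x => ?_, fun x hx => ?_⟩
  · simp only [smul_apply, LinearMap.sum_apply]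
    exact m.smul_mem _ (m.sum_mem fun i _ => (hf i).map_mem x)
  · simp only [smul_apply, LinearMap.sum_apply, (hf _).map_id x hx, Finset.sum_const,
      Finset.card_univ, ← Nat.cast_smul_eq_nsmul K, smul_smul, inv_mul_cancel₀ hι, one_smul]

namespace Representation.IntertwiningMap

variable {K G V : Type*} [Field K] [Group G] [AddCommGroup V] [Module K V]
  {ρ : Representation K G V} {H : Subgroup G}
  (π : IntertwiningMap (ρ.comp H.subtype) (ρ.comp H.subtype))

theorem conj_mul_of_mem (g : G) {h : G} (hh : h ∈ H) :
    ρ (g * h) ∘ₗ π.toLinearMap ∘ₗ ρ (g * h)⁻¹ = ρ g ∘ₗ π.toLinearMap ∘ₗ ρ g⁻¹ := by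
  ext v
  have hπ := isIntertwining _ _ π (⟨h, hh⟩⁻¹ : H) (ρ g⁻¹ v)
  simp only [MonoidHom.comp_apply, Subgroup.subtype_apply, Subgroup.coe_inv] at hπ
  simp only [LinearMap.comp_apply, mul_inv_rev, map_mul, Module.End.mul_apply, coe_toLinearMap,
    hπ, self_inv_apply]

def cosetConjugate (c : G ⧸ H) : V →ₗ[K] V :=
  c.liftOn' (fun g => ρ g ∘ₗ π.toLinearMap ∘ₗ ρ g⁻¹) fun a b hab => by
    obtain ⟨h, hh, rfl⟩ : ∃ h ∈ H, a * h = b :=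
      ⟨a⁻¹ * b, QuotientGroup.leftRel_apply.1 hab, by group⟩
    exact (π.conj_mul_of_mem a hh).symm

theorem cosetConjugate_mk (g : G) :
    π.cosetConjugate (g : G ⧸ H) = ρ g ∘ₗ π.toLinearMap ∘ₗ ρ g⁻¹ :=
  rfl

theorem cosetConjugate_smul_apply (s : G) (c : G ⧸ H) (v : V) :
    π.cosetConjugate (s • c) (ρ s v) = ρ s (π.cosetConjugate c v) := by
  induction c using QuotientGroup.induction_on with
  | H g => simp [cosetConjugate_mk, mul_inv_rev, map_mul]

theorem isProj_cosetConjugate {W : Subrepresentation ρ} (hπ : IsProj W.toSubmodule π.toLinearMap)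
    (c : G ⧸ H) : IsProj W.toSubmodule (π.cosetConjugate c) := by
  induction c using QuotientGroup.induction_on with
  | H g =>
    refine ⟨fun v => W.apply_mem_toSubmodule g (hπ.map_mem _), fun w hw => ?_⟩
    rw [cosetConjugate_mk, LinearMap.comp_apply, LinearMap.comp_apply,
      hπ.map_id _ (W.apply_mem_toSubmodule g⁻¹ hw), self_inv_apply]

variable [Fintype (G ⧸ H)]

def cosetAverage : IntertwiningMap ρ ρ where
  toLinearMap := (Fintype.card (G ⧸ H) : K)⁻¹ • ∑ c, π.cosetConjugate c
  isIntertwining' g := by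
    ext v
    simp only [LinearMap.comp_apply, LinearMap.smul_apply, LinearMap.sum_apply, map_smul, map_sum]
    congr 1
    refine (Fintype.sum_equiv (MulAction.toPerm g) _ _ fun c => ?_).symm
    exact (π.cosetConjugate_smul_apply g c v).symm

theorem isProj_cosetAverage {W : Subrepresentation ρ} (hπ : IsProj W.toSubmodule π.toLinearMap)
    (hH : (H.index : K) ≠ 0) : IsProj W.toSubmodule π.cosetAverage.toLinearMap := by
  rw [H.index_eq_card, Nat.card_eq_fintype_card] at hH
  exact IsProj.inv_card_smul_sum (π.isProj_cosetConjugate hπ) hH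

end Representation.IntertwiningMap

/-- Averaging argument: let `K` be a field, `G` a group, `H` a subgroup of `G` of finite index
`n` with `n` invertible in `K`. If the restriction to `H` of a `K`-linear representation `V`
of `G` is semisimple, then `V` is a semisimple representation of `G`. -/
theorem semisimple_of_restriction_semisimple
    (K : Type*) [Field K] (G : Type*) [Group G] (H : Subgroup G)
    [H.FiniteIndex] (hn : (H.index : K) ≠ 0)
    (V : Type*) [AddCommGroup V] [Module K V]
    (ρ : Representation K G V)
    (h : IsSemisimpleModule (MonoidAlgebra K ↥H) (Representation.asModule (ρ.comp H.subtype))) :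
    IsSemisimpleModule (MonoidAlgebra K G) ρ.asModule := by
  have := Fintype.ofFinite (G ⧸ H)
  rw [← Representation.isSemisimpleRepresentation_iff_isSemisimpleModule_asModule] at h ⊢
  refine ⟨fun W => ?_⟩
  obtain ⟨W', hW'⟩ := exists_isCompl (W.restrict H.subtype)
  obtain ⟨π, hπ⟩ := hW'.exists_isProj_subrepresentation
  exact Subrepresentation.exists_isCompl_of_isProj π.cosetAverage (π.isProj_cosetAverage hπ hn)
end
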